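/- arXiv:1707.05766 — 3 statements merged into one kernel-verified Lean document; each statement's English description precedes it below -/
import Mathlib

section
/- (Montgomery's Lemma) There holds: for every N ≥ 1, every collection of points x_1, …, x_N ∈ 𝕋², and all real numbers X_1, X_2 ≥ 0, one has Σ_{k ∈ ℤ², |k_1| ≤ X_1, |k_2| ≤ X_2} |Σ_{n=1}^N e^{2πi⟨k, x_n⟩}|² ≥ N · X_1 · X_2. -/
open scoped Real BigOperators
open MeasureTheory

noncomputable section

/-- The `d`-dimensional torus `ℝ^d/ℤ^d`. -/
abbrev Torus (d : ℕ) := Fin d → AddCircle (1 : ℝ)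

/-- The character `e^{2πi⟨k,x⟩}` for `k ∈ ℤ^d`, `x ∈ 𝕋^d`. -/
def torusChar {d : ℕ} (k : Fin d → ℤ) (x : Torus d) : ℂ := ∏ m, fourier (k m) (x m)

/-!
For unimodular characters `ψ₁, …, ψ_N` of an abelian group and a finite set `A`, write
`S p = ∑ₙ ψₙ p`. Expanding both sides gives
`∑_{a,b ∈ A} |S (a - b)|² = ∑_{m,n} |∑_{a ∈ A} ψₘ a · conj (ψₙ a)|²`, and the diagonal `m = n`
alone contributes `N |A|²`. Each `p ∈ A - A` is hit by at most `|A|` pairs `(a, b)`, so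
`∑_{p ∈ A - A} |S p|² ≥ N |A|`. On `𝕋^d`, with `ψₙ k = e^{2πi⟨k, xₙ⟩}` and
`A = ∏ᵢ [0, ⌊Xᵢ⌋]`, one has `|A| ≥ ∏ᵢ Xᵢ` and `A - A ⊆ ∏ᵢ [-⌊Xᵢ⌋, ⌊Xᵢ⌋]`, which is exactly the
set of frequencies `|kᵢ| ≤ Xᵢ`.
-/

open scoped ComplexConjugate Pointwise
open Finset

theorem Finset.sum_sum_sub_le_card_nsmul_sum {G M : Type*} [AddCommGroup G] [DecidableEq G]
    [AddCommMonoid M] [PartialOrder M] [IsOrderedAddMonoid M] {A B : Finset G}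
    (hAB : A - A ⊆ B) {f : G → M} (hf : ∀ p ∈ B, 0 ≤ f p) :
    ∑ a ∈ A, ∑ b ∈ A, f (a - b) ≤ #A • ∑ p ∈ B, f p := by
  rw [sum_comm, ← sum_const]
  refine sum_le_sum fun b hb => ?_
  refine (sum_map A (Equiv.subRight b).toEmbedding f).symm.trans_le <|
    sum_le_sum_of_subset_of_nonneg (fun p hp => hAB ?_) fun p hp _ => hf p hp
  obtain ⟨a, ha, rfl⟩ := mem_map.1 hp
  exact sub_mem_sub ha hb

theorem Finset.Icc_sub_Icc_subset {α : Type*} [AddCommGroup α] [PartialOrder α]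
    [IsOrderedAddMonoid α] [LocallyFiniteOrder α] [DecidableEq α] (a b c e : α) :
    Icc a b - Icc c e ⊆ Icc (a - e) (b - c) := by
  intro p hp
  obtain ⟨u, hu, v, hv, rfl⟩ := mem_sub.1 hp
  rw [mem_Icc] at hu hv ⊢
  exact ⟨sub_le_sub hu.1 hv.2, sub_le_sub hu.2 hv.1⟩

lemma Circle.sum_coe_mul_conj {α : Type*} (f : α → Circle) (s : Finset α) :
    ∑ a ∈ s, (f a : ℂ) * conj (f a : ℂ) = #s := by
  simp [Complex.mul_conj]

namespace AddChar

variable {G ι : Type*} [AddCommGroup G]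

lemma coe_map_sub_eq_mul_conj (ψ : AddChar G Circle) (a b : G) :
    (ψ (a - b) : ℂ) = ψ a * conj (ψ b : ℂ) := by
  rw [map_sub_eq_div, div_eq_mul_inv, Circle.coe_mul, Circle.coe_inv_eq_conj]

variable [Fintype ι] (ψ : ι → AddChar G Circle) (A : Finset G)

/-- Both sides are the squared Hilbert–Schmidt norm of `∑_{a ∈ A} v_a v_aᴴ`, where
`v_a = (ψ i a)ᵢ`. -/
theorem sum_sum_norm_sq_sum_sub_eq :
    ∑ a ∈ A, ∑ b ∈ A, ‖∑ i, (ψ i (a - b) : ℂ)‖ ^ 2 =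
      ∑ i, ∑ j, ‖∑ a ∈ A, (ψ i a : ℂ) * conj (ψ j a : ℂ)‖ ^ 2 := by
  apply Complex.ofReal_injective
  push_cast
  simp only [← Complex.mul_conj', map_sum, map_mul, Complex.conj_conj, sum_mul_sum,
    coe_map_sub_eq_mul_conj]
  rw [sum_comm]
  simp_rw [sum_comm (s := A) (t := (univ : Finset ι))]
  rw [sum_comm]
  refine sum_congr rfl fun i _ => sum_congr rfl fun j _ => sum_congr rfl fun a _ =>
    sum_congr rfl fun b _ => by ring

theorem card_mul_card_sq_le_sum_sum_norm_sq_sum_sub :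
    Fintype.card ι * (#A : ℝ) ^ 2 ≤ ∑ a ∈ A, ∑ b ∈ A, ‖∑ i, (ψ i (a - b) : ℂ)‖ ^ 2 := by
  rw [sum_sum_norm_sq_sum_sub_eq]
  calc Fintype.card ι * (#A : ℝ) ^ 2
      = ∑ i, ‖∑ a ∈ A, (ψ i a : ℂ) * conj (ψ i a : ℂ)‖ ^ 2 := by
        simp [Circle.sum_coe_mul_conj]
    _ ≤ _ := sum_le_sum fun i _ =>
        single_le_sum (f := fun j => ‖∑ a ∈ A, (ψ i a : ℂ) * conj (ψ j a : ℂ)‖ ^ 2)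
          (fun j _ => by positivity) (mem_univ i)

variable {A} in
theorem card_mul_card_le_sum_norm_sq_sum [DecidableEq G] {B : Finset G} (hAB : A - A ⊆ B) :
    Fintype.card ι * (#A : ℝ) ≤ ∑ p ∈ B, ‖∑ i, (ψ i p : ℂ)‖ ^ 2 := by
  rcases A.eq_empty_or_nonempty with rfl | hA
  · simpa using sum_nonneg fun p _ => by positivity
  have hmul : #A * (Fintype.card ι * (#A : ℝ)) ≤ #A * ∑ p ∈ B, ‖∑ i, (ψ i p : ℂ)‖ ^ 2 := by
    calc #A * (Fintype.card ι * (#A : ℝ)) = Fintype.card ι * (#A : ℝ) ^ 2 := by ring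
      _ ≤ _ := card_mul_card_sq_le_sum_sum_norm_sq_sum_sub ψ A
      _ ≤ _ := by
        simpa using sum_sum_sub_le_card_nsmul_sum hAB (f := fun p => ‖∑ i, (ψ i p : ℂ)‖ ^ 2)
          fun p _ => by positivity
  exact le_of_mul_le_mul_left hmul (by simpa using hA.card_pos)

end AddChar

def torusAddChar {d : ℕ} (x : Torus d) : AddChar (Fin d → ℤ) Circle where
  toFun k := ∏ m, AddCircle.toCircle (k m • x m)
  map_zero_eq_one' := by simp
  map_add_eq_mul' k l := by simp [add_smul, AddCircle.toCircle_add, prod_mul_distrib]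

lemma coe_torusAddChar {d : ℕ} (x : Torus d) (k : Fin d → ℤ) :
    (torusAddChar x k : ℂ) = torusChar k x := by
  simp only [torusAddChar, torusChar, fourier_apply, AddChar.coe_mk]
  exact map_prod Circle.coeHom _ _

lemma abs_intCast_le_iff_le_natFloor {X : ℝ} (hX : 0 ≤ X) (k : ℤ) :
    |(k : ℝ)| ≤ X ↔ |k| ≤ ⌊X⌋₊ := by
  rw [Int.natCast_floor_eq_floor hX, Int.le_floor, Int.cast_abs]

lemma mem_Icc_neg_natFloor_iff {d : ℕ} {X : Fin d → ℝ} (hX : 0 ≤ X) (k : Fin d → ℤ) :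
    k ∈ Icc (-fun i => (⌊X i⌋₊ : ℤ)) (fun i => ⌊X i⌋₊) ↔ ∀ i, |(k i : ℝ)| ≤ X i := by
  simp only [mem_Icc, Pi.le_def, Pi.neg_apply, abs_intCast_le_iff_le_natFloor (hX _), abs_le,
    forall_and]

theorem natCast_mul_prod_le_tsum_norm_sq_sum_torusChar {d N : ℕ} (x : Fin N → Torus d)
    {X : Fin d → ℝ} (hX : 0 ≤ X) :
    N * ∏ i, X i ≤
      ∑' k : {k : Fin d → ℤ // ∀ i, |(k i : ℝ)| ≤ X i}, ‖∑ n, torusChar k.1 (x n)‖ ^ 2 := by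
  rw [← (Equiv.subtypeEquivRight (mem_Icc_neg_natFloor_iff hX)).tsum_eq]
  simp only [Equiv.subtypeEquivRight_apply_coe]
  rw [Finset.tsum_subtype _ fun k => ‖∑ n, torusChar k (x n)‖ ^ 2]
  set K : Fin d → ℤ := fun i => ⌊X i⌋₊
  have hcard : (#(Icc 0 K) : ℝ) = ∏ i, ((⌊X i⌋₊ : ℝ) + 1) := by
    simp [K, Pi.card_Icc]
  calc N * ∏ i, X i ≤ N * #(Icc 0 K) := by
        rw [hcard]
        gcongr
        · exact fun i _ => hX i
        · exact (Nat.lt_floor_add_one _).le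
    _ ≤ ∑ p ∈ Icc (-K) K, ‖∑ n, (torusAddChar (x n) p : ℂ)‖ ^ 2 := by
        simpa using AddChar.card_mul_card_le_sum_norm_sq_sum (fun n => torusAddChar (x n))
          (Icc_sub_Icc_subset 0 K 0 K)
    _ = _ := by simp [coe_torusAddChar]

theorem montgomery_lemma_general (N : ℕ) (x : Fin N → Torus 2)
    (X₁ X₂ : ℝ) (hX₁ : 0 ≤ X₁) (hX₂ : 0 ≤ X₂) :
    (N : ℝ) * X₁ * X₂ ≤
      ∑' k : {k : Fin 2 → ℤ // |(k 0 : ℝ)| ≤ X₁ ∧ |(k 1 : ℝ)| ≤ X₂},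
        ‖∑ n, torusChar k.1 (x n)‖ ^ 2 := by
  calc (N : ℝ) * X₁ * X₂ = N * ∏ i, ![X₁, X₂] i := by simp [mul_assoc]
    _ ≤ _ := natCast_mul_prod_le_tsum_norm_sq_sum_torusChar x
        (by simp [Pi.le_def, Fin.forall_fin_two, hX₁, hX₂])
    _ = _ := (Equiv.subtypeEquivRight
        (q := fun k : Fin 2 → ℤ => |(k 0 : ℝ)| ≤ X₁ ∧ |(k 1 : ℝ)| ≤ X₂)
        fun _ => Fin.forall_fin_two).tsum_eq fun k => ‖∑ n, torusChar k.1 (x n)‖ ^ 2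

/-- Montgomery's Lemma. -/
theorem montgomery_lemma (N : ℕ) (hN : 1 ≤ N) (x : Fin N → Torus 2)
    (X₁ X₂ : ℝ) (hX₁ : 0 ≤ X₁) (hX₂ : 0 ≤ X₂) :
    (N : ℝ) * X₁ * X₂ ≤
      ∑' k : {k : Fin 2 → ℤ // |(k 0 : ℝ)| ≤ X₁ ∧ |(k 1 : ℝ)| ≤ X₂},
        ‖∑ n, torusChar k.1 (x n)‖ ^ 2 :=
  montgomery_lemma_general N x X₁ X₂ hX₁ hX₂
end
end

section
/- (Lemma 1, Averaging Fejér Kernels) There exists a universal constant c > 0 such that for every integer N ≥ 0 and every x ∈ ℝ with |x| ≤ 1/2, one has (1/(N+1)) Σ_{k=0}^{N} F_k(x) ≥ c · N · log(e + N|x|) / (1 + N² x²). -/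
/-!
With `z = e^{2πix}` one has `(k+1) F_k(x) = |1 + z + ⋯ + z^k|²`, so the kernels are nonnegative
and `F_k(x) sin²(πx) = sin²(π(k+1)x)/(k+1)`.

If `N|x| ≤ 1/6`, every `z^m` with `m ≤ N` has real part at least `1/2`, so `F_k(x) ≥ (k+1)/4`
and the average is at least `(N+2)/8`. Otherwise the average is at least a constant times
`S/(N x²)`, where `S = Σ_{m ≤ N+1} sin²(πmx)/m`. The terms with `m|x| ≤ 1/2` already give
`S ≥ 1/18`. On a dyadic block `[a, 2a)` with `a ≥ 1/|x|` the cosine sum `Σ cos(2πmx)` is at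
most `1/|sin(πx)| ≤ a/2`, so `Σ sin²(πmx) ≥ a/4` there and the block contributes at least
`1/8`; about `log₂(N|x|)` such blocks fit below `N`, whence `S ≳ log(e + N|x|)`.
-/

open scoped Real BigOperators

noncomputable section

/-- The Fejér kernel `F_k(x) = Σ_{|j| ≤ k} (1 − |j|/(k+1)) e^{2πijx}` (a real number,
realized as the real part of the defining exponential sum). -/
def fejer (k : ℕ) (x : ℝ) : ℝ :=
  (∑ j ∈ Finset.Icc (-(k : ℤ)) (k : ℤ),
      ((1 - |(j : ℝ)| / (k + 1) : ℝ) : ℂ) * Complex.exp (2 * π * Complex.I * j * x)).re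

open Finset

section GeomSum

variable {K : Type*} [Field K] {z : K}

lemma pow_mul_sum_range_inv_pow (hz : z ≠ 0) (n : ℕ) :
    z ^ n * ∑ m ∈ range n, z⁻¹ ^ m = ∑ m ∈ range n, z ^ (m + 1) := by
  rw [mul_sum, ← sum_range_reflect (fun m => z ^ (m + 1)) n]
  refine sum_congr rfl fun m hm => ?_
  have hsplit : z ^ n = z ^ (n - 1 - m + 1) * z ^ m := by
    rw [← pow_add]; congr 1; have := mem_range.1 hm; omega
  rw [hsplit, inv_pow, mul_inv_cancel_right₀ (pow_ne_zero _ hz)]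

lemma sum_range_pow_mul_sum_range_inv_pow (hz : z ≠ 0) (n : ℕ) :
    (∑ m ∈ range (n + 1), z ^ m) * ∑ m ∈ range (n + 1), z⁻¹ ^ m =
      n + 1 + ∑ m ∈ range n, ((n : K) - m) * (z ^ (m + 1) + z⁻¹ ^ (m + 1)) := by
  induction n with
  | zero => simp
  | succ n ih =>
    have hcoeff :
        ∑ m ∈ range (n + 1), (((n + 1 : ℕ) : K) - m) * (z ^ (m + 1) + z⁻¹ ^ (m + 1)) =
          ∑ m ∈ range n, ((n : K) - m) * (z ^ (m + 1) + z⁻¹ ^ (m + 1)) +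
            ∑ m ∈ range (n + 1), (z ^ (m + 1) + z⁻¹ ^ (m + 1)) := by
      have htop := sum_range_succ (fun m => ((n : K) - m) * (z ^ (m + 1) + z⁻¹ ^ (m + 1))) n
      rw [sub_self, zero_mul, add_zero] at htop
      rw [← htop, ← sum_add_distrib]
      exact sum_congr rfl fun m _ => by push_cast; ring
    have h₁ := pow_mul_sum_range_inv_pow hz (n + 1)
    have h₂ := pow_mul_sum_range_inv_pow (inv_ne_zero hz) (n + 1)
    rw [inv_inv] at h₂
    have hw : z ^ (n + 1) * z⁻¹ ^ (n + 1) = 1 := by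
      rw [inv_pow, mul_inv_cancel₀ (pow_ne_zero _ hz)]
    rw [sum_range_succ _ (n + 1), sum_range_succ _ (n + 1), hcoeff, sum_add_distrib]
    push_cast
    linear_combination ih + h₁ + h₂ + hw

end GeomSum

lemma sum_Icc_neg_eq_add_sum_range {M : Type*} [AddCommMonoid M] (f : ℤ → M) (n : ℕ) :
    ∑ j ∈ Icc (-(n : ℤ)) n, f j = f 0 + ∑ m ∈ range n, (f (m + 1) + f (-(m + 1))) := by
  induction n with
  | zero => simp
  | succ n ih =>
    have hIcc : Icc (-((n + 1 : ℕ) : ℤ)) ((n + 1 : ℕ) : ℤ) =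
        insert ((n : ℤ) + 1) (insert (-((n : ℤ) + 1)) (Icc (-(n : ℤ)) n)) := by
      ext j; simp only [mem_Icc, mem_insert]; omega
    rw [hIcc, sum_insert (by simp only [mem_insert, mem_Icc]; omega),
      sum_insert (by simp only [mem_Icc]; omega), ih, sum_range_succ]
    abel

lemma conj_cexp_two_pi_I_mul (x : ℝ) :
    (starRingEnd ℂ) (Complex.exp (2 * π * Complex.I * x)) =
      (Complex.exp (2 * π * Complex.I * x))⁻¹ := by
  rw [← Complex.exp_conj, ← Complex.exp_neg]
  congr 1
  simp [Complex.conj_ofReal, map_ofNat]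

lemma fejer_mul_add_one (k : ℕ) (x : ℝ) :
    fejer k x * (k + 1) =
      Complex.normSq (∑ m ∈ range (k + 1), Complex.exp (2 * π * Complex.I * x) ^ m) := by
  set z := Complex.exp (2 * π * Complex.I * x)
  have hz : z ≠ 0 := Complex.exp_ne_zero _
  have hconj :
      (starRingEnd ℂ) (∑ m ∈ range (k + 1), z ^ m) = ∑ m ∈ range (k + 1), z⁻¹ ^ m := by
    simp [map_sum, map_pow, z, conj_cexp_two_pi_I_mul]
  have hexp : ∀ j : ℤ, Complex.exp (2 * π * Complex.I * j * x) = z ^ j := fun j => by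
    rw [← Complex.exp_int_mul]; ring_nf
  have hsum : (∑ j ∈ Icc (-(k : ℤ)) k, ((1 - |(j : ℝ)| / (k + 1) : ℝ) : ℂ) *
      Complex.exp (2 * π * Complex.I * j * x)) * (k + 1) =
      k + 1 + ∑ m ∈ range k, ((k : ℂ) - m) * (z ^ (m + 1) + z⁻¹ ^ (m + 1)) := by
    simp only [hexp]
    rw [sum_Icc_neg_eq_add_sum_range, add_mul, sum_mul]
    congr 1
    · simp
    refine sum_congr rfl fun m _ => ?_
    rw [zpow_neg, ← Nat.cast_succ, zpow_natCast, inv_pow]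
    have habs : |(((m + 1 : ℕ) : ℤ) : ℝ)| = m + 1 := by
      push_cast; exact abs_of_nonneg (by positivity)
    have habs' : |((-((m + 1 : ℕ) : ℤ) : ℤ) : ℝ)| = m + 1 := by
      rw [Int.cast_neg, abs_neg, habs]
    rw [habs', habs]
    push_cast
    field_simp
    ring
  rw [← Complex.ofReal_re (Complex.normSq _), ← Complex.mul_conj, hconj,
    sum_range_pow_mul_sum_range_inv_pow hz, ← hsum, fejer]
  exact_mod_cast (Complex.re_mul_ofReal _ _).symm

lemma cexp_two_pi_I_mul_pow (x : ℝ) (m : ℕ) :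
    Complex.exp (2 * π * Complex.I * x) ^ m =
      Complex.exp (2 * π * Complex.I * (m * x : ℝ)) := by
  rw [← Complex.exp_nat_mul]; push_cast; ring_nf

lemma re_cexp_two_pi_I_mul (θ : ℝ) :
    (Complex.exp (2 * π * Complex.I * θ)).re = Real.cos (2 * π * θ) := by
  rw [← Complex.exp_ofReal_mul_I_re]; push_cast; ring_nf

lemma norm_cexp_two_pi_I_mul_sub_one (θ : ℝ) :
    ‖Complex.exp (2 * π * Complex.I * θ) - 1‖ = 2 * |Real.sin (π * θ)| := by
  have h := Complex.norm_exp_I_mul_ofReal_sub_one (2 * π * θ)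
  rw [Real.norm_eq_abs, abs_mul, abs_two, show 2 * π * θ / 2 = π * θ by ring] at h
  rw [← h]; push_cast; ring_nf

lemma fejer_nonneg (k : ℕ) (x : ℝ) : 0 ≤ fejer k x :=
  nonneg_of_mul_nonneg_left ((fejer_mul_add_one k x).symm ▸ Complex.normSq_nonneg _)
    (by positivity)

lemma fejer_neg (k : ℕ) (x : ℝ) : fejer k (-x) = fejer k x := by
  rw [fejer, fejer, ← Complex.conj_re, map_sum]
  refine congrArg Complex.re (sum_congr rfl fun j _ => ?_)
  rw [map_mul, Complex.conj_ofReal, ← Complex.exp_conj]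
  congr 2
  simp [Complex.conj_ofReal, map_ofNat]

lemma fejer_abs (k : ℕ) (x : ℝ) : fejer k |x| = fejer k x := by
  rcases abs_choice x with h | h <;> simp only [h, fejer_neg]

lemma fejer_mul_sin_sq (k : ℕ) (x : ℝ) :
    fejer k x * Real.sin (π * x) ^ 2 = Real.sin (π * (k + 1) * x) ^ 2 / (k + 1) := by
  set G := ∑ m ∈ range (k + 1), Complex.exp (2 * π * Complex.I * x) ^ m
  have hG : ‖G‖ * (2 * |Real.sin (π * x)|) = 2 * |Real.sin (π * (k + 1) * x)| := by
    rw [← norm_cexp_two_pi_I_mul_sub_one, ← norm_mul, geom_sum_mul, cexp_two_pi_I_mul_pow,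
      norm_cexp_two_pi_I_mul_sub_one]
    push_cast; ring_nf
  rw [eq_div_iff (by positivity), mul_right_comm, fejer_mul_add_one, Complex.normSq_eq_norm_sq,
    ← sq_abs (Real.sin (π * x)), ← sq_abs (Real.sin _), ← mul_pow]
  congr 1
  linarith

lemma two_mul_le_sin_pi_mul {t : ℝ} (h0 : 0 ≤ t) (h1 : t ≤ 1 / 2) :
    2 * t ≤ Real.sin (π * t) := by
  have h := Real.mul_le_sin (x := π * t) (by positivity) (by nlinarith [Real.pi_pos])
  rwa [← mul_assoc, div_mul_cancel₀ _ Real.pi_ne_zero] at h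

lemma add_one_div_four_le_fejer {k : ℕ} {x : ℝ} (hkx : k * |x| ≤ 1 / 6) :
    ((k : ℝ) + 1) / 4 ≤ fejer k x := by
  set G := ∑ m ∈ range (k + 1), Complex.exp (2 * π * Complex.I * x) ^ m
  have hcos :
      ∀ m ∈ range (k + 1), (1 : ℝ) / 2 ≤ (Complex.exp (2 * π * Complex.I * x) ^ m).re := by
    intro m hm
    have hmk : (m : ℝ) ≤ k := by exact_mod_cast Nat.lt_succ_iff.1 (mem_range.1 hm)
    have hmx : 2 * π * |m * x| ≤ π / 3 := by
      have : (m : ℝ) * |x| ≤ 1 / 6 := (mul_le_mul_of_nonneg_right hmk (abs_nonneg x)).trans hkx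
      rw [abs_mul, Nat.abs_cast]
      nlinarith [Real.pi_pos]
    rw [cexp_two_pi_I_mul_pow, re_cexp_two_pi_I_mul, ← Real.cos_abs, abs_mul, abs_mul,
      abs_two, abs_of_pos Real.pi_pos, ← Real.cos_pi_div_three]
    exact Real.cos_le_cos_of_nonneg_of_le_pi (by positivity) (by linarith [Real.pi_pos]) hmx
  have hre : ((k : ℝ) + 1) / 2 ≤ G.re := by
    calc ((k : ℝ) + 1) / 2 = ∑ _m ∈ range (k + 1), (1 : ℝ) / 2 := by simp; ring
      _ ≤ G.re := by rw [Complex.re_sum]; exact sum_le_sum hcos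
  have hsq : (((k : ℝ) + 1) / 2) ^ 2 ≤ fejer k x * (k + 1) := by
    rw [fejer_mul_add_one]
    exact (pow_le_pow_left₀ (by positivity) hre 2).trans (sq G.re ▸ Complex.re_sq_le_normSq G)
  nlinarith

lemma abs_sum_Ico_cos_mul_abs_sin_le (x : ℝ) (a b : ℕ) :
    |∑ m ∈ Ico a b, Real.cos (2 * π * m * x)| * |Real.sin (π * x)| ≤ 1 := by
  rcases le_or_gt b a with hba | hab
  · simp [Ico_eq_empty_of_le hba]
  set z := Complex.exp (2 * π * Complex.I * x)
  have hre : ∑ m ∈ Ico a b, Real.cos (2 * π * m * x) = (∑ m ∈ Ico a b, z ^ m).re := by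
    rw [Complex.re_sum]
    refine sum_congr rfl fun m _ => ?_
    rw [cexp_two_pi_I_mul_pow, re_cexp_two_pi_I_mul, mul_assoc]
  have hnorm : ‖z ^ b - z ^ a‖ ≤ 2 := by
    refine (norm_sub_le _ _).trans_eq ?_
    norm_num [z, Complex.norm_exp]
  have hmul : ‖∑ m ∈ Ico a b, z ^ m‖ * (2 * |Real.sin (π * x)|) ≤ 2 := by
    rw [← norm_cexp_two_pi_I_mul_sub_one, ← norm_mul, geom_sum_Ico_mul _ hab.le]
    exact hnorm
  rw [hre]
  nlinarith [Complex.abs_re_le_norm (∑ m ∈ Ico a b, z ^ m), abs_nonneg (Real.sin (π * x))]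

lemma one_div_eight_le_sum_Ico_sin_sq_div {x : ℝ} {a : ℕ} (h : 2 ≤ a * |Real.sin (π * x)|) :
    1 / 8 ≤ ∑ m ∈ Ico a (2 * a), Real.sin (π * m * x) ^ 2 / m := by
  have ha : (0 : ℝ) < a := by
    by_contra! ha
    nlinarith [abs_nonneg (Real.sin (π * x)), Nat.cast_nonneg (α := ℝ) a]
  have hcos := abs_sum_Ico_cos_mul_abs_sin_le x a (2 * a)
  have hsin_sq : (a : ℝ) / 4 ≤ ∑ m ∈ Ico a (2 * a), Real.sin (π * m * x) ^ 2 := by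
    have hsplit : ∑ m ∈ Ico a (2 * a), Real.sin (π * m * x) ^ 2 =
        a / 2 - (∑ m ∈ Ico a (2 * a), Real.cos (2 * π * m * x)) / 2 := by
      have hterm (m : ℕ) : Real.sin (π * m * x) ^ 2 = 1 / 2 - Real.cos (2 * π * m * x) / 2 := by
        rw [Real.sin_sq_eq_half_sub]; ring_nf
      simp only [hterm, sum_sub_distrib, ← sum_div, sum_const, Nat.card_Ico,
        show 2 * a - a = a by omega, nsmul_eq_mul]
      ring
    nlinarith [le_abs_self (∑ m ∈ Ico a (2 * a), Real.cos (2 * π * m * x))]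
  calc (1 : ℝ) / 8 = (a / 4) / (2 * a) := by field_simp; norm_num
    _ ≤ ∑ m ∈ Ico a (2 * a), Real.sin (π * m * x) ^ 2 / (2 * a) := by
      rw [← sum_div]; gcongr
    _ ≤ ∑ m ∈ Ico a (2 * a), Real.sin (π * m * x) ^ 2 / m := by
      refine sum_le_sum fun m hm => ?_
      have hm := mem_Ico.1 hm
      have hm' : (a : ℝ) ≤ m := by exact_mod_cast hm.1
      have hm'' : (m : ℝ) ≤ 2 * a := by exact_mod_cast hm.2.le
      gcongr
      linarith

lemma natCast_div_eight_le_sum_Ico_sin_sq_div {x : ℝ} {a : ℕ}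
    (h : 2 ≤ a * |Real.sin (π * x)|) (n : ℕ) :
    (n : ℝ) / 8 ≤ ∑ m ∈ Ico a (2 ^ n * a), Real.sin (π * m * x) ^ 2 / m := by
  induction n with
  | zero => simp
  | succ n ih =>
    have hblock : 2 ≤ ((2 ^ n * a : ℕ) : ℝ) * |Real.sin (π * x)| := by
      have : (1 : ℝ) ≤ 2 ^ n := one_le_pow₀ (by norm_num)
      push_cast
      nlinarith [abs_nonneg (Real.sin (π * x))]
    have h₁ : a ≤ 2 ^ n * a := Nat.le_mul_of_pos_left a (by positivity)
    have h₂ : 2 ^ n * a ≤ 2 ^ (n + 1) * a := by rw [pow_succ]; nlinarith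
    rw [← sum_Ico_consecutive _ h₁ h₂, pow_succ, mul_comm _ 2, mul_assoc]
    have := one_div_eight_le_sum_Ico_sin_sq_div hblock
    push_cast at this ⊢
    linarith

lemma natLog_div_eight_le_sum_Ico_sin_sq_div {x : ℝ} {a : ℕ}
    (h : 2 ≤ a * |Real.sin (π * x)|) (b : ℕ) :
    (Nat.log 2 (b / a) : ℝ) / 8 ≤ ∑ m ∈ Ico a b, Real.sin (π * m * x) ^ 2 / m := by
  rcases eq_or_ne (b / a) 0 with hb | hb
  · rw [hb, Nat.log_zero_right, Nat.cast_zero, zero_div]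
    exact sum_nonneg fun m _ => by positivity
  have hle : 2 ^ Nat.log 2 (b / a) * a ≤ b :=
    (Nat.le_div_iff_mul_le (Nat.pos_of_ne_zero (by rintro rfl; simp at hb))).1
      (Nat.pow_log_le_self 2 hb)
  exact (natCast_div_eight_le_sum_Ico_sin_sq_div h _).trans
    (sum_le_sum_of_subset_of_nonneg (Ico_subset_Ico_right hle) fun m _ _ => by positivity)

lemma two_mul_sq_le_sum_Ico_sin_sq_div {x : ℝ} (hx : 0 ≤ x) {K : ℕ} (hK : K * x ≤ 1 / 2) :
    2 * (K * x) ^ 2 ≤ ∑ m ∈ Ico 1 (K + 1), Real.sin (π * m * x) ^ 2 / m := by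
  induction K with
  | zero => simp
  | succ K ih =>
    push_cast at hK
    have hsin := two_mul_le_sin_pi_mul (by positivity) hK
    rw [← mul_assoc π] at hsin
    rw [sum_Ico_succ_top (by omega)]
    have hterm : 4 * (K + 1) * x ^ 2 ≤ Real.sin (π * (K + 1) * x) ^ 2 / (K + 1) := by
      rw [le_div_iff₀ (by positivity)]
      nlinarith [pow_le_pow_left₀ (by positivity) hsin 2]
    push_cast
    nlinarith [ih (by nlinarith)]

lemma sum_fejer_mul_sin_sq (n : ℕ) (x : ℝ) :
    (∑ k ∈ range n, fejer k x) * Real.sin (π * x) ^ 2 =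
      ∑ m ∈ Ico 1 (n + 1), Real.sin (π * m * x) ^ 2 / m := by
  rw [sum_mul, sum_Ico_eq_sum_range, Nat.add_sub_cancel]
  refine sum_congr rfl fun k _ => ?_
  rw [fejer_mul_sin_sq]
  push_cast
  ring_nf

lemma one_div_eighteen_le_sum_Ico_sin_sq_div {N : ℕ} {x : ℝ} (hx0 : 0 < x) (hx : x ≤ 1 / 2)
    (hN : 1 / 6 < N * x) : 1 / 18 ≤ ∑ m ∈ Ico 1 (N + 1), Real.sin (π * m * x) ^ 2 / m := by
  set K := min N ⌊(2 * x)⁻¹⌋₊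
  have hfloor : (2 * x)⁻¹ < ⌊(2 * x)⁻¹⌋₊ + 1 := Nat.lt_floor_add_one _
  have hKx : K * x ≤ 1 / 2 := by
    have : (K : ℝ) ≤ (2 * x)⁻¹ :=
      (Nat.cast_le.2 (min_le_right _ _)).trans (Nat.floor_le (by positivity))
    calc (K : ℝ) * x ≤ (2 * x)⁻¹ * x := by gcongr
      _ = 1 / 2 := by field_simp
  have hKx' : 1 / 6 ≤ K * x := by
    simp only [K, Nat.cast_min, min_mul_of_nonneg _ _ hx0.le, le_min_iff]
    refine ⟨hN.le, ?_⟩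
    have hone : (1 : ℝ) ≤ ⌊(2 * x)⁻¹⌋₊ := by
      exact_mod_cast Nat.le_floor
        (by rw [Nat.cast_one]; exact one_le_inv_iff₀.2 ⟨by positivity, by linarith⟩)
    have hhalf : (2 * x)⁻¹ * x = 1 / 2 := by field_simp
    nlinarith
  calc (1 : ℝ) / 18 ≤ 2 * (K * x) ^ 2 := by nlinarith
    _ ≤ ∑ m ∈ Ico 1 (K + 1), Real.sin (π * m * x) ^ 2 / m :=
      two_mul_sq_le_sum_Ico_sin_sq_div hx0.le hKx
    _ ≤ _ := sum_le_sum_of_subset_of_nonneg (Ico_subset_Ico_right (by omega))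
      fun m _ _ => by positivity

lemma log_exp_one_add_le_sum_Ico_sin_sq_div {N : ℕ} {x : ℝ} (hx0 : 0 < x) (hx : x ≤ 1 / 2)
    (hN : 1 / 6 < N * x) :
    Real.log (Real.exp 1 + N * x) ≤
      62 * ∑ m ∈ Ico 1 (N + 2), Real.sin (π * m * x) ^ 2 / m := by
  set S := ∑ m ∈ Ico 1 (N + 2), Real.sin (π * m * x) ^ 2 / m
  have hS : 1 / 18 ≤ S := one_div_eighteen_le_sum_Ico_sin_sq_div hx0 hx (by push_cast; nlinarith)
  set a := ⌈x⁻¹⌉₊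
  have ha_pos : 0 < a := Nat.ceil_pos.2 (inv_pos.2 hx0)
  have ha_ge : x⁻¹ ≤ a := Nat.le_ceil _
  have ha_lt : (a : ℝ) * x < 2 := by
    have := Nat.ceil_lt_add_one (inv_nonneg.2 hx0.le)
    have : x⁻¹ * x = 1 := inv_mul_cancel₀ hx0.ne'
    nlinarith
  have ha_sin : 2 ≤ a * |Real.sin (π * x)| := by
    have hsin := two_mul_le_sin_pi_mul hx0.le hx
    have : x⁻¹ * x = 1 := inv_mul_cancel₀ hx0.ne'
    rw [abs_of_nonneg (by linarith)]
    nlinarith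
  set n := Nat.log 2 ((N + 2) / a)
  have hSn : (n : ℝ) / 8 ≤ S :=
    (natLog_div_eight_le_sum_Ico_sin_sq_div ha_sin (N + 2)).trans
      (sum_le_sum_of_subset_of_nonneg (Ico_subset_Ico_left ha_pos) fun m _ _ => by positivity)
  have hNa : ((N + 2 : ℕ) : ℝ) < 2 ^ (n + 1) * a := by
    exact_mod_cast (Nat.div_lt_iff_lt_mul ha_pos).1 (Nat.lt_pow_succ_log_self one_lt_two _)
  have hlog : Real.log (Real.exp 1 + N * x) ≤ n + 3 := by
    have hpow : (4 : ℝ) ≤ 2 ^ (n + 2) := by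
      calc (4 : ℝ) = 2 ^ 2 := by norm_num
        _ ≤ 2 ^ (n + 2) := pow_le_pow_right₀ (by norm_num) (by omega)
    have hNx : N * x < 2 ^ (n + 2) := by
      push_cast at hNa
      have : ((N : ℝ) + 2) * x < 2 ^ (n + 1) * a * x := by gcongr
      nlinarith [pow_succ (2 : ℝ) (n + 1)]
    calc Real.log (Real.exp 1 + N * x) ≤ Real.log (2 ^ (n + 3)) := by
          gcongr
          linarith [Real.exp_one_lt_d9, pow_succ (2 : ℝ) (n + 2)]
      _ = (n + 3) * Real.log 2 := by rw [Real.log_pow]; push_cast; ring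
      _ ≤ n + 3 := by nlinarith [Real.log_two_lt_d9]
  linarith

lemma add_two_div_eight_le_average_fejer {N : ℕ} {x : ℝ} (hNx : N * |x| ≤ 1 / 6) :
    ((N : ℝ) + 2) / 8 ≤ (1 / (N + 1 : ℝ)) * ∑ k ∈ range (N + 1), fejer k x := by
  have hgauss (n : ℕ) : ∑ k ∈ range n, ((k : ℝ) + 1) / 4 = n * (n + 1) / 8 := by
    induction n with
    | zero => simp
    | succ n ih => rw [sum_range_succ, ih]; push_cast; ring
  have hfejer :
      ∑ k ∈ range (N + 1), ((k : ℝ) + 1) / 4 ≤ ∑ k ∈ range (N + 1), fejer k x := by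
    refine sum_le_sum fun k hk => add_one_div_four_le_fejer ?_
    have : (k : ℝ) ≤ N := by exact_mod_cast Nat.lt_succ_iff.1 (mem_range.1 hk)
    nlinarith [abs_nonneg x]
  rw [hgauss] at hfejer
  push_cast at hfejer
  rw [one_div, ← div_eq_inv_mul, le_div_iff₀ (by positivity)]
  linarith

lemma log_exp_one_add_le_sq_mul_sum_fejer {N : ℕ} {x : ℝ} (hx0 : 0 < x) (hx : x ≤ 1 / 2)
    (hN : 1 / 6 < N * x) :
    Real.log (Real.exp 1 + N * x) ≤ 620 * x ^ 2 * ∑ k ∈ range (N + 1), fejer k x := by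
  have hA : 0 ≤ ∑ k ∈ range (N + 1), fejer k x := sum_nonneg fun k _ => fejer_nonneg k x
  have hsin : Real.sin (π * x) ^ 2 ≤ 10 * x ^ 2 := by
    have h₁ := Real.sin_le (by positivity : 0 ≤ π * x)
    have h₂ := Real.sin_nonneg_of_nonneg_of_le_pi (by positivity : 0 ≤ π * x)
      (by nlinarith [Real.pi_pos])
    have hπ : π ^ 2 ≤ 10 := by nlinarith [Real.pi_lt_d2, Real.pi_pos]
    calc Real.sin (π * x) ^ 2 ≤ (π * x) ^ 2 := pow_le_pow_left₀ h₂ h₁ 2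
      _ = π ^ 2 * x ^ 2 := by ring
      _ ≤ 10 * x ^ 2 := by gcongr
  have h := log_exp_one_add_le_sum_Ico_sin_sq_div hx0 hx hN
  rw [← sum_fejer_mul_sin_sq] at h
  nlinarith

/-- Lemma 1 (Averaging Fejér Kernels). -/
theorem averaged_fejer_lower_bound :
    ∃ c : ℝ, 0 < c ∧ ∀ (N : ℕ) (x : ℝ), |x| ≤ 1/2 →
      c * N * Real.log (Real.exp 1 + N * |x|) / (1 + (N : ℝ) ^ 2 * x ^ 2) ≤
        (1 / (N + 1 : ℝ)) * ∑ k ∈ Finset.range (N + 1), fejer k x := by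
  refine ⟨1 / 2000, by norm_num, fun N x hx => ?_⟩
  have hL : 0 ≤ Real.log (Real.exp 1 + N * |x|) :=
    Real.log_nonneg (by linarith [Real.add_one_le_exp 1, mul_nonneg N.cast_nonneg (abs_nonneg x)])
  rcases le_or_gt (N * |x|) (1 / 6) with hsmall | hlarge
  · have hL2 : Real.log (Real.exp 1 + N * |x|) ≤ 2 := by
      linarith [Real.log_le_sub_one_of_pos (by positivity : 0 < Real.exp 1 + N * |x|),
        Real.exp_one_lt_d9]
    calc 1 / 2000 * N * Real.log (Real.exp 1 + N * |x|) / (1 + (N : ℝ) ^ 2 * x ^ 2)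
        ≤ 1 / 2000 * N * Real.log (Real.exp 1 + N * |x|) :=
          div_le_self (by positivity) (le_add_of_nonneg_right (by positivity))
      _ ≤ ((N : ℝ) + 2) / 8 := by nlinarith [N.cast_nonneg (α := ℝ)]
      _ ≤ _ := add_two_div_eight_le_average_fejer hsmall
  · rcases Nat.eq_zero_or_pos N with rfl | hN
    · norm_num at hlarge
    have h := log_exp_one_add_le_sq_mul_sum_fejer
      (pos_of_mul_pos_right (by linarith) N.cast_nonneg) hx hlarge
    simp only [fejer_abs, sq_abs] at h
    have hN' : (1 : ℝ) ≤ N := Nat.one_le_cast.2 hN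
    have hT := sum_nonneg fun k (_ : k ∈ range (N + 1)) => fejer_nonneg k x
    field_simp
    nlinarith [mul_nonneg (mul_nonneg hT (sq_nonneg x)) (sub_nonneg.2 hN')]
end
end

section
/- (Proposition 2) For every dimension d ≥ 1 there exists a constant c > 0 (depending only on d) such that for every t ∈ (0, 1], every N ≥ 1, and all points x_1, …, x_N ∈ 𝕋^d, one has ‖ N − Σ_{n=1}^N K_t(· − x_n) ‖²_{L^∞(𝕋^d)} ≥ c · Σ_{k ∈ ℤ^d, k ≠ 0, ‖k‖ ≤ t^{−1/2}} |Σ_{n=1}^N e^{2πi⟨k, x_n⟩}|². -/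
open scoped Real BigOperators
open MeasureTheory

noncomputable section

/-- The Euclidean norm of an integer vector `k ∈ ℤ^d`. -/
def znorm {d : ℕ} (k : Fin d → ℤ) : ℝ := Real.sqrt (∑ m, ((k m : ℝ)) ^ 2)

/-- The heat kernel `K_t(x) = Σ_{k ∈ ℤ^d} e^{−4π²‖k‖²t} e^{2πi⟨k,x⟩}` on `𝕋^d`
(a real number, realized as the real part of the defining series). -/
def heatKernel (d : ℕ) (t : ℝ) (x : Torus d) : ℝ :=
  (∑' k : Fin d → ℤ, (Real.exp (-4 * π ^ 2 * znorm k ^ 2 * t) : ℂ) * torusChar k x).re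

/-!
Put `f = N - ∑ₙ K_t(· - xₙ)`. Expanding the heat kernel in its Fourier series, the `k`-th Fourier
coefficient of `f` for `k ≠ 0` is `-e^{-4π²‖k‖²t} · conj (∑ₙ e^{2πi⟨k,xₙ⟩})`, and
`e^{-8π²‖k‖²t} ≥ e^{-8π²}` as soon as `‖k‖² t ≤ 1`. Bessel's inequality in `L²(𝕋^d)` together with
`‖f‖₂ ≤ ‖f‖_∞` (the torus has measure one) gives the claim with `c = e^{-8π²}`.
-/

open Complex UnitAddTorus
open scoped ComplexConjugate

theorem summable_pi_prod_of_nonneg {ι α : Type*} [Fintype ι] {g : α → ℝ} (hg0 : 0 ≤ g)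
    (hg : Summable g) : Summable fun k : ι → α => ∏ i, g (k i) := by
  classical
  refine summable_of_sum_le (c := (∑' a, g a) ^ Fintype.card ι)
    (fun k => Finset.prod_nonneg fun i _ => hg0 _) fun s => ?_
  calc ∑ k ∈ s, ∏ i, g (k i)
      ≤ ∑ k ∈ Fintype.piFinset fun i => s.image (· i), ∏ i, g (k i) :=
        Finset.sum_le_sum_of_subset_of_nonneg
          (fun k hk => Fintype.mem_piFinset.2 fun i => Finset.mem_image_of_mem _ hk)
          (fun k _ _ => Finset.prod_nonneg fun i _ => hg0 _)
    _ = ∏ i, ∑ a ∈ s.image (· i), g a := (Finset.prod_univ_sum _ _).symm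
    _ ≤ ∏ _i : ι, ∑' a, g a :=
        Finset.prod_le_prod (fun i _ => Finset.sum_nonneg fun a _ => hg0 a)
          fun i _ => hg.sum_le_tsum _ fun a _ => hg0 a
    _ = (∑' a, g a) ^ Fintype.card ι := Finset.prod_const _

theorem summable_exp_neg_mul_int_sq {c : ℝ} (hc : 0 < c) :
    Summable fun n : ℤ => Real.exp (-(c * n ^ 2)) := by
  refine (summable_pow_mul_jacobiTheta₂_term_bound 0 (div_pos hc Real.pi_pos) 0).congr fun n => ?_
  field_simp
  ring_nf

section

/- Mathlib's Fourier theory on `UnitAddTorus` is stated for this Haar probability measure; the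
global `volume` on `AddCircle 1` is `ENNReal.ofReal 1 • haarAddCircle`, equal to it but not
definitionally (see `volume_torus_eq_pi_haarAddCircle`). -/
local instance : MeasureSpace UnitAddCircle := ⟨AddCircle.haarAddCircle⟩

local instance : IsProbabilityMeasure (volume : Measure UnitAddCircle) :=
  inferInstanceAs (IsProbabilityMeasure AddCircle.haarAddCircle)

namespace UnitAddTorus

variable {d : Type*} [Fintype d]

theorem mFourierCoeff_eq_of_hasSum {a : (d → ℤ) → ℂ} {f : C(UnitAddTorus d, ℂ)}
    (h : HasSum (fun k => a k • mFourier k) f) (l : d → ℤ) : mFourierCoeff f l = a l := by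
  have hL2 : HasSum (fun k => a k • mFourierLp 2 k) (f.toLp 2 volume ℂ) := by
    simpa only [map_smul] using (ContinuousMap.toLp 2 volume ℂ).hasSum h
  have hinner := (innerSL ℂ (mFourierLp 2 l)).hasSum hL2
  simp only [innerSL_apply_apply, inner_smul_right, orthonormal_iff_ite.mp orthonormal_mFourier,
    mul_ite, mul_one, mul_zero] at hinner
  have hsingle := hasSum_single (f := fun k => if l = k then a k else 0) l
    fun k hk => if_neg (Ne.symm hk)
  rw [if_pos rfl] at hsingle
  rw [← mFourierCoeff_toLp, ← mFourierBasis_repr, HilbertBasis.repr_apply_apply,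
    coe_mFourierBasis]
  exact hinner.unique hsingle

theorem summable_sq_norm_mFourierCoeff (f : C(UnitAddTorus d, ℂ)) :
    Summable fun k => ‖mFourierCoeff f k‖ ^ 2 := by
  simpa only [mFourierCoeff_toLp] using (hasSum_sq_mFourierCoeff (f.toLp 2 volume ℂ)).summable

theorem tsum_sq_norm_mFourierCoeff_le (f : C(UnitAddTorus d, ℂ)) (S : Set (d → ℤ)) :
    ∑' k : S, ‖mFourierCoeff f k‖ ^ 2 ≤ (eLpNorm f ⊤ volume).toReal ^ 2 := by
  have hbessel := (orthonormal_mFourier.comp (Subtype.val : S → d → ℤ)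
    Subtype.val_injective).tsum_inner_products_le (f.toLp 2 volume ℂ)
  simp only [Function.comp_apply, ← coe_mFourierBasis, ← HilbertBasis.repr_apply_apply,
    mFourierBasis_repr, mFourierCoeff_toLp, Lp.norm_def,
    eLpNorm_congr_ae (ContinuousMap.coeFn_toLp _ _)] at hbessel
  refine hbessel.trans (pow_le_pow_left₀ ENNReal.toReal_nonneg ?_ 2)
  exact ENNReal.toReal_mono (f.memLp volume ℂ).eLpNorm_ne_top
    (eLpNorm_le_eLpNorm_of_exponent_le le_top f.continuous.aestronglyMeasurable)

end UnitAddTorus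

end

variable {d : ℕ}

theorem volume_torus_eq_pi_haarAddCircle :
    (volume : Measure (Torus d)) = Measure.pi fun _ => AddCircle.haarAddCircle := by
  simp only [volume_pi, AddCircle.volume_eq_smul_haarAddCircle, ENNReal.ofReal_one, one_smul]

theorem coe_mFourier_eq_torusChar (k : Fin d → ℤ) : ⇑(mFourier k) = torusChar k := rfl

theorem norm_torusChar (k : Fin d → ℤ) (x : Torus d) : ‖torusChar k x‖ = 1 := by
  simp [torusChar, Circle.norm_coe]

theorem torusChar_neg (k : Fin d → ℤ) (x : Torus d) : torusChar (-k) x = conj (torusChar k x) :=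
  mFourier_neg (n := k) (x := x)

theorem torusChar_sub (k : Fin d → ℤ) (y x : Torus d) :
    torusChar k (y - x) = torusChar k y * conj (torusChar k x) := by
  simp only [torusChar, map_prod, ← Finset.prod_mul_distrib, Pi.sub_apply, sub_eq_add_neg,
    fourier_apply, zsmul_add, AddCircle.toCircle_add, Circle.coe_mul, smul_neg, fourier_neg']

theorem norm_sum_torusChar_le (k : Fin d → ℤ) {N : ℕ} (x : Fin N → Torus d) :
    ‖∑ n, torusChar k (x n)‖ ≤ N :=
  (norm_sum_le _ _).trans_eq (by simp [norm_torusChar])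

theorem znorm_nonneg (k : Fin d → ℤ) : 0 ≤ znorm k := Real.sqrt_nonneg _

theorem znorm_sq (k : Fin d → ℤ) : znorm k ^ 2 = ∑ m, (k m : ℝ) ^ 2 :=
  Real.sq_sqrt (Finset.sum_nonneg fun _ _ => sq_nonneg _)

theorem znorm_neg (k : Fin d → ℤ) : znorm (-k) = znorm k := by
  simp [znorm]

theorem summable_exp_neg_mul_znorm_sq {c : ℝ} (hc : 0 < c) :
    Summable fun k : Fin d → ℤ => Real.exp (-(c * znorm k ^ 2)) := by
  simpa only [znorm_sq, Finset.mul_sum, ← Finset.sum_neg_distrib, Real.exp_sum] using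
    summable_pi_prod_of_nonneg (fun n => (Real.exp_pos _).le) (summable_exp_neg_mul_int_sq hc)

theorem summable_heatKernel_coeff {t : ℝ} (ht : 0 < t) :
    Summable fun k : Fin d → ℤ => Real.exp (-4 * π ^ 2 * znorm k ^ 2 * t) :=
  (summable_exp_neg_mul_znorm_sq (by positivity : 0 < 4 * π ^ 2 * t)).congr fun k => by ring_nf

theorem summable_heatKernel_series {t : ℝ} (ht : 0 < t) (x : Torus d) :
    Summable fun k : Fin d → ℤ => (Real.exp (-4 * π ^ 2 * znorm k ^ 2 * t) : ℂ) * torusChar k x :=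
  (summable_heatKernel_coeff ht).of_norm_bounded fun k => by
    rw [norm_mul, norm_torusChar, mul_one, norm_real, Real.norm_of_nonneg (Real.exp_pos _).le]

theorem ofReal_heatKernel (t : ℝ) (x : Torus d) :
    (heatKernel d t x : ℂ) =
      ∑' k : Fin d → ℤ, (Real.exp (-4 * π ^ 2 * znorm k ^ 2 * t) : ℂ) * torusChar k x := by
  rw [heatKernel, ← conj_eq_iff_re, conj_tsum, ← (Equiv.neg _).tsum_eq]
  simp only [Equiv.neg_apply, map_mul, conj_ofReal, ← torusChar_neg, znorm_neg, neg_neg]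

def heatSumCoeff (t : ℝ) {N : ℕ} (x : Fin N → Torus d) (k : Fin d → ℤ) : ℂ :=
  Real.exp (-4 * π ^ 2 * znorm k ^ 2 * t) * conj (∑ n, torusChar k (x n))

theorem norm_heatSumCoeff (t : ℝ) {N : ℕ} (x : Fin N → Torus d) (k : Fin d → ℤ) :
    ‖heatSumCoeff t x k‖ = Real.exp (-4 * π ^ 2 * znorm k ^ 2 * t) * ‖∑ n, torusChar k (x n)‖ := by
  rw [heatSumCoeff, norm_mul, RCLike.norm_conj, norm_real,
    Real.norm_of_nonneg (Real.exp_pos _).le]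

theorem summable_heatSumCoeff_smul_mFourier {t : ℝ} (ht : 0 < t) {N : ℕ} (x : Fin N → Torus d) :
    Summable fun k => heatSumCoeff t x k • mFourier k :=
  ((summable_heatKernel_coeff ht).mul_right (N : ℝ)).of_norm_bounded fun k => by
    rw [norm_smul, mFourier_norm, mul_one, norm_heatSumCoeff]
    gcongr
    exact norm_sum_torusChar_le k x

theorem tsum_heatSumCoeff_smul_mFourier_apply {t : ℝ} (ht : 0 < t) {N : ℕ}
    (x : Fin N → Torus d) (y : Torus d) :
    (∑' k, heatSumCoeff t x k • mFourier k) y = ((∑ n, heatKernel d t (y - x n) : ℝ) : ℂ) := by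
  rw [← ContinuousMap.tsum_apply (summable_heatSumCoeff_smul_mFourier ht x), ofReal_sum]
  simp only [ofReal_heatKernel]
  rw [← Summable.tsum_finsetSum fun n _ => summable_heatKernel_series ht (y - x n)]
  refine tsum_congr fun k => ?_
  simp only [ContinuousMap.smul_apply, coe_mFourier_eq_torusChar, heatSumCoeff, torusChar_sub,
    map_sum, Finset.mul_sum, Finset.sum_mul, smul_eq_mul]
  exact Finset.sum_congr rfl fun n _ => by ring

theorem znorm_sq_mul_le_one {t : ℝ} (ht : 0 < t) {k : Fin d → ℤ}
    (hk : znorm k ≤ t ^ (-(1:ℝ)/2)) : znorm k ^ 2 * t ≤ 1 := by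
  have hsq := pow_le_pow_left₀ (znorm_nonneg k) hk 2
  rw [← Real.rpow_natCast (t ^ _), ← Real.rpow_mul ht.le] at hsq
  rw [show -(1:ℝ)/2 * ((2 : ℕ) : ℝ) = -1 by norm_num, Real.rpow_neg_one] at hsq
  calc znorm k ^ 2 * t ≤ t⁻¹ * t := by gcongr
    _ = 1 := inv_mul_cancel₀ ht.ne'

theorem exp_mul_sq_norm_le_sq_norm_heatSumCoeff {t : ℝ} (ht : 0 < t) {N : ℕ}
    (x : Fin N → Torus d) {k : Fin d → ℤ} (hk : znorm k ≤ t ^ (-(1:ℝ)/2)) :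
    Real.exp (-(8 * π ^ 2)) * ‖∑ n, torusChar k (x n)‖ ^ 2 ≤ ‖heatSumCoeff t x k‖ ^ 2 := by
  rw [norm_heatSumCoeff, mul_pow, ← Real.exp_nat_mul]
  gcongr
  push_cast
  nlinarith [mul_le_mul_of_nonneg_left (znorm_sq_mul_le_one ht hk) (sq_nonneg π)]

def heatDiscrepancy (t : ℝ) {N : ℕ} (x : Fin N → Torus d) : C(UnitAddTorus (Fin d), ℂ) :=
  ContinuousMap.const _ (N : ℂ) - ∑' k, heatSumCoeff t x k • mFourier k

theorem norm_heatDiscrepancy_apply {t : ℝ} (ht : 0 < t) {N : ℕ} (x : Fin N → Torus d)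
    (y : Torus d) : ‖heatDiscrepancy t x y‖ = ‖(N : ℝ) - ∑ n, heatKernel d t (y - x n)‖ := by
  rw [heatDiscrepancy, ContinuousMap.sub_apply, tsum_heatSumCoeff_smul_mFourier_apply ht,
    ContinuousMap.const_apply, ← ofReal_natCast, ← ofReal_sub, norm_real]

theorem mFourierCoeff_heatDiscrepancy {t : ℝ} (ht : 0 < t) {N : ℕ} (x : Fin N → Torus d)
    {k : Fin d → ℤ} (hk : k ≠ 0) : mFourierCoeff (heatDiscrepancy t x) k = -heatSumCoeff t x k := by
  have hconst : HasSum (fun k : Fin d → ℤ => (if k = 0 then (N : ℂ) else 0) • mFourier k)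
      (ContinuousMap.const _ (N : ℂ)) := by
    convert hasSum_single (f := fun k : Fin d → ℤ => (if k = 0 then (N : ℂ) else 0) • mFourier k) 0
      fun k hk => by ext; simp [hk]
    ext y
    simp [mFourier_zero]
  have hseries : HasSum
      (fun k => ((if k = 0 then (N : ℂ) else 0) - heatSumCoeff t x k) • mFourier k)
      (heatDiscrepancy t x) := by
    refine (hconst.sub (summable_heatSumCoeff_smul_mFourier ht x).hasSum).congr_fun fun k => ?_
    ext
    simp only [ContinuousMap.smul_apply, ContinuousMap.sub_apply, smul_eq_mul, sub_mul]
  rw [mFourierCoeff_eq_of_hasSum hseries, if_neg hk, zero_sub]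

theorem proposition_two_general (d : ℕ) :
    ∃ c : ℝ, 0 < c ∧ ∀ (t : ℝ), 0 < t → t ≤ 1 → ∀ (N : ℕ), 1 ≤ N → ∀ x : Fin N → Torus d,
      c * ∑' k : {k : Fin d → ℤ // k ≠ 0 ∧ znorm k ≤ t ^ (-(1:ℝ)/2)},
            ‖∑ n, torusChar k.1 (x n)‖ ^ 2 ≤
        ((eLpNorm (fun y => (N : ℝ) - ∑ n, heatKernel d t (y - x n)) ⊤ volume).toReal) ^ 2 := by
  refine ⟨Real.exp (-(8 * π ^ 2)), Real.exp_pos _, fun t ht _ N _ x => ?_⟩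
  set S : Set (Fin d → ℤ) := {k | k ≠ 0 ∧ znorm k ≤ t ^ (-(1:ℝ)/2)}
  set F := heatDiscrepancy t x
  have hterm : ∀ k : S, Real.exp (-(8 * π ^ 2)) * ‖∑ n, torusChar k.1 (x n)‖ ^ 2
      ≤ ‖mFourierCoeff F k‖ ^ 2 := fun k => by
    rw [mFourierCoeff_heatDiscrepancy ht x k.2.1, norm_neg]
    exact exp_mul_sq_norm_le_sq_norm_heatSumCoeff ht x k.2.2
  have hsum := (summable_sq_norm_mFourierCoeff F).subtype S
  calc Real.exp (-(8 * π ^ 2)) * ∑' k : S, ‖∑ n, torusChar k.1 (x n)‖ ^ 2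
      = ∑' k : S, Real.exp (-(8 * π ^ 2)) * ‖∑ n, torusChar k.1 (x n)‖ ^ 2 := tsum_mul_left.symm
    _ ≤ ∑' k : S, ‖mFourierCoeff F k‖ ^ 2 :=
        (hsum.of_nonneg_of_le (fun _ => by positivity) hterm).tsum_le_tsum hterm hsum
    _ ≤ (eLpNorm F ⊤ (Measure.pi fun _ => AddCircle.haarAddCircle)).toReal ^ 2 :=
        tsum_sq_norm_mFourierCoeff_le F S
    _ = _ := by
        rw [← volume_torus_eq_pi_haarAddCircle,
          eLpNorm_congr_norm_ae (ae_of_all _ (norm_heatDiscrepancy_apply ht x))]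

/-- Proposition 2. -/
theorem proposition_two (d : ℕ) (hd : 1 ≤ d) :
    ∃ c : ℝ, 0 < c ∧ ∀ (t : ℝ), 0 < t → t ≤ 1 → ∀ (N : ℕ), 1 ≤ N → ∀ x : Fin N → Torus d,
      c * ∑' k : {k : Fin d → ℤ // k ≠ 0 ∧ znorm k ≤ t ^ (-(1:ℝ)/2)},
            ‖∑ n, torusChar k.1 (x n)‖ ^ 2 ≤
        ((eLpNorm (fun y => (N : ℝ) - ∑ n, heatKernel d t (y - x n)) ⊤ volume).toReal) ^ 2 :=
  proposition_two_general d
end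
end
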